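/- arXiv:1502.06170 — 5 statements merged into one kernel-verified Lean document; each statement's English description precedes it below -/
import Mathlib

section
/- (Proposition 3.A.) Let α ∈ (0,1) and p > 1/α. For every ε ∈ (0, (α − 1/p)/2) there exist a function f₀ ∈ L_p(0,1) and a constant C(α,p) > 0 such that for every h ∈ (0,1), the modulus of continuity over (0,1) satisfies ω(I^α[f₀], h) ≥ C(α,p) · h^{α − 1/p + ε}. (One may take f₀(x) = x^{−β} with β = 1/p − ε, for which C(α,p) = B(1−β,α)/Γ(α).) -/
/-!
For `f₀(t) = t^(-β)` on `(0,1)` with `β = 1/p - ε`, the substitution `t = s x` gives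
`I^α[f₀](x) = c x^(α-β)` with `c = B(1-β, α)/Γ(α) > 0`. Since `α - β = α - 1/p + ε > 0`, comparing
the values at `h` and `h/2` yields `ω(I^α[f₀], h) ≥ c (1 - 2^(β-α)) h^(α-β)`, while `-βp > -1`
keeps `f₀` in `L_p(0,1)`.
-/

open MeasureTheory Set

/-- Modulus of continuity of `g` over the set `X`. -/
noncomputable def omegaOn (X : Set ℝ) (g : ℝ → ℝ) (h : ℝ) : ℝ :=
  sSup {v | ∃ x ∈ X, ∃ y ∈ X, |x - y| ≤ h ∧ v = |g x - g y|}

/-- Riemann–Liouville fractional integral of order `α`: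
`I^α[f](x) = (1/Γ(α)) ∫_0^x f(t) (x-t)^(α-1) dt`. -/
noncomputable def RLint (α : ℝ) (f : ℝ → ℝ) (x : ℝ) : ℝ :=
  (1 / Real.Gamma α) * ∫ t in (0:ℝ)..x, f t * (x - t) ^ (α - 1)

lemma intervalIntegrable_rpow_mul_one_sub_rpow {a b : ℝ} (ha : -1 < a) (hb : -1 < b) :
    IntervalIntegrable (fun s : ℝ => s ^ a * (1 - s) ^ b) volume 0 1 := by
  have h_left : IntervalIntegrable (fun s : ℝ => s ^ a * (1 - s) ^ b) volume 0 (1 / 2) := by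
    refine (intervalIntegral.intervalIntegrable_rpow' ha).mul_continuousOn ?_
    refine (continuous_const.sub continuous_id).continuousOn.rpow_const fun s hs => Or.inl ?_
    rw [uIcc_of_le (by norm_num)] at hs
    exact (show (0 : ℝ) < 1 - s by linarith [hs.2]).ne'
  have h_right : IntervalIntegrable (fun s : ℝ => s ^ a * (1 - s) ^ b) volume (1 / 2) 1 := by
    have h_one_sub : IntervalIntegrable (fun s : ℝ => (1 - s) ^ b) volume (1 / 2) 1 := by
      have := (intervalIntegral.intervalIntegrable_rpow' hb (a := 0) (b := 1 / 2)).comp_sub_left 1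
      norm_num at this
      exact this.symm
    refine h_one_sub.continuousOn_mul (continuousOn_id.rpow_const fun s hs => Or.inl ?_)
    rw [uIcc_of_le (by norm_num)] at hs
    exact (show (0 : ℝ) < s by linarith [hs.1]).ne'
  exact h_left.trans h_right

lemma integral_rpow_mul_one_sub_rpow_pos {a b : ℝ} (ha : -1 < a) (hb : -1 < b) :
    0 < ∫ s in (0 : ℝ)..1, s ^ a * (1 - s) ^ b :=
  intervalIntegral.intervalIntegral_pos_of_pos_on
    (intervalIntegrable_rpow_mul_one_sub_rpow ha hb)
    (fun s hs => mul_pos (Real.rpow_pos_of_pos hs.1 _) (Real.rpow_pos_of_pos (by linarith [hs.2]) _))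
    one_pos

lemma integral_rpow_mul_sub_rpow {x : ℝ} (hx : 0 < x) (a b : ℝ) :
    ∫ t in (0 : ℝ)..x, t ^ a * (x - t) ^ b
      = x ^ (a + b + 1) * ∫ s in (0 : ℝ)..1, s ^ a * (1 - s) ^ b := by
  have h_subst := intervalIntegral.integral_comp_mul_right
    (fun t => t ^ a * (x - t) ^ b) hx.ne' (a := 0) (b := 1)
  simp only [zero_mul, one_mul] at h_subst
  have h_scaled : ∫ s in (0 : ℝ)..1, (s * x) ^ a * (x - s * x) ^ b
      = x ^ (a + b) * ∫ s in (0 : ℝ)..1, s ^ a * (1 - s) ^ b := by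
    rw [← intervalIntegral.integral_const_mul]
    refine intervalIntegral.integral_congr fun s hs => ?_
    rw [uIcc_of_le zero_le_one] at hs
    rw [show x - s * x = x * (1 - s) by ring, Real.mul_rpow hs.1 hx.le,
      Real.mul_rpow hx.le (by linarith [hs.2]), Real.rpow_add hx]
    ring
  rw [h_scaled, smul_eq_mul, eq_inv_mul_iff_mul_eq₀ hx.ne'] at h_subst
  rw [← h_subst, Real.rpow_add_one hx.ne']
  ring

lemma RLint_congr {α x : ℝ} {f g : ℝ → ℝ} (hx : 0 ≤ x) (hfg : EqOn f g (Ioc 0 x)) :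
    RLint α f x = RLint α g x := by
  unfold RLint
  congr 1
  refine intervalIntegral.integral_congr_ae (Filter.Eventually.of_forall fun t ht => ?_)
  rw [uIoc_of_le hx] at ht
  rw [hfg ht]

lemma RLint_rpow {α x : ℝ} (hx : 0 < x) (a : ℝ) :
    RLint α (fun t => t ^ a) x
      = (∫ s in (0 : ℝ)..1, s ^ a * (1 - s) ^ (α - 1)) / Real.Gamma α * x ^ (a + α) := by
  rw [RLint, integral_rpow_mul_sub_rpow hx, show a + (α - 1) + 1 = a + α by ring]
  ring

lemma integrableOn_abs_indicator_rpow_pow {a p : ℝ} (hap : -1 < a * p) :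
    IntegrableOn (fun x => |(Ioo (0 : ℝ) 1).indicator (· ^ a) x| ^ p) (Ioo 0 1) := by
  have h_int : IntegrableOn (fun x : ℝ => x ^ (a * p)) (Ioo 0 1) := by
    rw [← intervalIntegrable_iff_integrableOn_Ioo_of_le zero_le_one]
    exact intervalIntegral.intervalIntegrable_rpow' hap
  refine h_int.congr_fun (fun x hx => ?_) measurableSet_Ioo
  rw [indicator_of_mem hx, abs_of_nonneg (Real.rpow_nonneg hx.1.le _),
    ← Real.rpow_mul hx.1.le]

lemma abs_sub_le_omegaOn {X : Set ℝ} {g : ℝ → ℝ} {M h x y : ℝ} (hg : ∀ z ∈ X, |g z| ≤ M)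
    (hx : x ∈ X) (hy : y ∈ X) (hxy : |x - y| ≤ h) : |g x - g y| ≤ omegaOn X g h := by
  refine le_csSup ⟨M + M, ?_⟩ ⟨x, hx, y, hy, hxy, rfl⟩
  rintro v ⟨u, hu, w, hw, -, rfl⟩
  exact (abs_sub _ _).trans (add_le_add (hg u hu) (hg w hw))

lemma le_omegaOn_Ioo_of_eqOn_rpow {g : ℝ → ℝ} {c γ h : ℝ} (hc : 0 ≤ c) (hγ : 0 ≤ γ)
    (hg : EqOn g (fun x => c * x ^ γ) (Ioo 0 1)) (hh : h ∈ Ioo (0 : ℝ) 1) :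
    c * (1 - 2 ^ (-γ)) * h ^ γ ≤ omegaOn (Ioo 0 1) g h := by
  have h_half : h / 2 ∈ Ioo (0 : ℝ) 1 := ⟨by linarith [hh.1], by linarith [hh.2]⟩
  have h_bound : ∀ z ∈ Ioo (0 : ℝ) 1, |g z| ≤ c := fun z hz => by
    rw [hg hz, abs_of_nonneg (by have := Real.rpow_nonneg hz.1.le γ; positivity)]
    exact mul_le_of_le_one_right hc (Real.rpow_le_one hz.1.le hz.2.le hγ)
  have h_diff : g h - g (h / 2) = c * (1 - 2 ^ (-γ)) * h ^ γ := by
    rw [hg hh, hg h_half]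
    dsimp only
    rw [Real.div_rpow hh.1.le zero_le_two, Real.rpow_neg zero_le_two]
    ring
  have h_dist : |h - h / 2| ≤ h := by
    rw [abs_of_nonneg (by linarith [hh.1])]
    linarith [hh.1]
  calc c * (1 - 2 ^ (-γ)) * h ^ γ ≤ |g h - g (h / 2)| := h_diff ▸ le_abs_self _
    _ ≤ omegaOn (Ioo 0 1) g h := abs_sub_le_omegaOn h_bound hh h_half h_dist

theorem exponent_sharp_on_unit_interval (α p : ℝ) (hα : α ∈ Set.Ioo (0:ℝ) 1)
    (hp : 1 / α < p) :
    ∀ ε ∈ Set.Ioo (0:ℝ) ((α - 1 / p) / 2),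
      ∃ f₀ : ℝ → ℝ, (∀ x : ℝ, x ∉ Set.Ioo (0:ℝ) 1 → f₀ x = 0) ∧
        MeasureTheory.IntegrableOn (fun x => |f₀ x| ^ p) (Set.Ioo 0 1) ∧
        ∃ C > (0:ℝ), ∀ h ∈ Set.Ioo (0:ℝ) 1,
          C * h ^ (α - 1 / p + ε) ≤ omegaOn (Set.Ioo 0 1) (RLint α f₀) h := by
  obtain ⟨hα0, hα1⟩ := hα
  rintro ε ⟨hε0, hε⟩
  have hp0 : 0 < p := (one_div_pos.mpr hα0).trans hp
  have hpα : 1 / p < α := by rwa [div_lt_iff₀ hp0, ← div_lt_iff₀' hα0]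
  set β := 1 / p - ε
  set K := ∫ s in (0 : ℝ)..1, s ^ (-β) * (1 - s) ^ (α - 1)
  have hK : 0 < K := integral_rpow_mul_one_sub_rpow_pos (by linarith) (by linarith)
  have hβp : -1 < -β * p := by
    have : -β * p = ε * p - 1 := by simp only [β]; field_simp; ring
    rw [this]
    linarith [mul_pos hε0 hp0]
  have hγ : 0 < α - 1 / p + ε := by linarith
  have hRL : EqOn (RLint α ((Ioo (0 : ℝ) 1).indicator (· ^ (-β))))
      (fun x => K / Real.Gamma α * x ^ (α - 1 / p + ε)) (Ioo 0 1) := fun x hx => by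
    rw [RLint_congr hx.1.le (fun t ht => indicator_of_mem
      (show t ∈ Ioo (0 : ℝ) 1 from ⟨ht.1, ht.2.trans_lt hx.2⟩) _),
      RLint_rpow hx.1, show -β + α = α - 1 / p + ε by ring]
  have hc : 0 < K / Real.Gamma α := div_pos hK (Real.Gamma_pos_of_pos hα0)
  refine ⟨_, fun x hx => indicator_of_notMem hx _, integrableOn_abs_indicator_rpow_pow hβp,
    _, mul_pos hc (sub_pos.mpr (Real.rpow_lt_one_of_one_lt_of_neg one_lt_two (neg_neg_of_pos hγ))),
    fun h hh => le_omegaOn_Ioo_of_eqOn_rpow hc.le hγ.le hRL hh⟩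
end

section
/- (Proposition 3.B.) Let α ∈ (0,1), p > 1/α, γ ∈ ℝ, and K ∈ (0,∞). Suppose that for every f ∈ L_p(0,∞) and every h > 0 the inequality ω(I^α[f], h) ≤ K · h^γ · |f|_p holds, where the modulus of continuity is taken over (0,∞). Then necessarily γ = α − 1/p. -/
open MeasureTheory Set

/-- The `L_p(0,∞)` norm `|f|_p = (∫_0^∞ |f(x)|^p dx)^(1/p)`. -/
noncomputable def LpNorm (p : ℝ) (f : ℝ → ℝ) : ℝ :=
  (∫ x in Set.Ioi (0:ℝ), |f x| ^ p) ^ (1 / p)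

/-!
Test the inequality on `f = 1_(0,h]`. For `0 < x ≤ h` one has `I^α[f](x) = x^α / (α Γ(α))`, so the
jump of `I^α[f]` between `h/2` and `h` gives `ω(I^α[f], h) ≥ c h^α` with `c > 0`, while
`|f|_p = h^(1/p)`. Thus `c h^α ≤ K h^(γ + 1/p)` for all `h > 0`, and letting `h → 0` or `h → ∞`
forces `α = γ + 1/p`. Since `sSup` of an unbounded set of reals is `0`, the lower bound on `ω`
needs `I^α[f]` to be bounded, which holds because `x^α - (x - h)^α ≤ h^α` for `α ≤ 1`.
-/
lemma integral_sub_rpow_sub_one {α : ℝ} (hα : 0 < α) (x a b : ℝ) :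
    ∫ t in a..b, (x - t) ^ (α - 1) = ((x - a) ^ α - (x - b) ^ α) / α := by
  rw [intervalIntegral.integral_comp_sub_left (fun u => u ^ (α - 1)) x,
    integral_rpow (Or.inl (by linarith)), sub_add_cancel]

lemma intervalIntegral_indicator_Ioc_mul {h x : ℝ} (hh : 0 ≤ h) (hx : 0 ≤ x) (g : ℝ → ℝ) :
    ∫ t in (0:ℝ)..x, (Ioc 0 h).indicator 1 t * g t = ∫ t in (0:ℝ)..min h x, g t := by
  simp_rw [← indicator_mul_left, Pi.one_apply, one_mul]
  rw [intervalIntegral.integral_of_le hx, intervalIntegral.integral_of_le (le_min hh hx),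
    integral_indicator measurableSet_Ioc, Measure.restrict_restrict measurableSet_Ioc,
    Ioc_inter_Ioc, max_self]

lemma RLint_indicator_Ioc {α h x : ℝ} (hα : 0 < α) (hh : 0 ≤ h) (hx : 0 ≤ x) :
    RLint α ((Ioc 0 h).indicator 1) x
      = (x ^ α - (x - min h x) ^ α) / (α * Real.Gamma α) := by
  rw [RLint, intervalIntegral_indicator_Ioc_mul hh hx, integral_sub_rpow_sub_one hα, sub_zero]
  field_simp

lemma RLint_indicator_Ioc_of_le {α h x : ℝ} (hα : 0 < α) (hx : 0 ≤ x) (hxh : x ≤ h) :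
    RLint α ((Ioc 0 h).indicator 1) x = x ^ α / (α * Real.Gamma α) := by
  rw [RLint_indicator_Ioc hα (hx.trans hxh) hx, min_eq_right hxh, sub_self,
    Real.zero_rpow hα.ne', sub_zero]

lemma RLint_indicator_Ioc_mem_Icc {α h x : ℝ} (hα : α ∈ Ioc (0:ℝ) 1) (hh : 0 ≤ h) (hx : 0 ≤ x) :
    RLint α ((Ioc 0 h).indicator 1) x ∈ Icc 0 (h ^ α / (α * Real.Gamma α)) := by
  have hden : 0 < α * Real.Gamma α := mul_pos hα.1 (Real.Gamma_pos_of_pos hα.1)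
  set m := min h x
  have hm : 0 ≤ m := le_min hh hx
  have hxm : 0 ≤ x - m := sub_nonneg.2 (min_le_right h x)
  rw [RLint_indicator_Ioc hα.1 hh hx]
  refine ⟨div_nonneg (sub_nonneg.2 ?_) hden.le, div_le_div_of_nonneg_right ?_ hden.le⟩
  · exact Real.rpow_le_rpow hxm (by linarith) hα.1.le
  · have hsub := Real.rpow_add_le_add_rpow hxm hm hα.1.le hα.2
    have hmono := Real.rpow_le_rpow hm (min_le_left h x) hα.1.le
    rw [sub_add_cancel] at hsub
    linarith

lemma mul_rpow_le_omegaOn_RLint_indicator_Ioc {α h : ℝ} (hα : α ∈ Ioc (0:ℝ) 1) (hh : 0 < h) :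
    (1 - (1 / 2) ^ α) / (α * Real.Gamma α) * h ^ α
      ≤ omegaOn (Ioi 0) (RLint α ((Ioc 0 h).indicator 1)) h := by
  have hden : 0 < α * Real.Gamma α := mul_pos hα.1 (Real.Gamma_pos_of_pos hα.1)
  have hbound : ∀ z ∈ Ioi (0:ℝ),
      |RLint α ((Ioc 0 h).indicator 1) z| ≤ h ^ α / (α * Real.Gamma α) := fun z hz => by
    obtain ⟨h0, h1⟩ := RLint_indicator_Ioc_mem_Icc hα hh.le (mem_Ioi.1 hz).le
    rwa [abs_of_nonneg h0]
  have hjump := abs_sub_le_omegaOn (h := h) hbound (mem_Ioi.2 hh) (mem_Ioi.2 (half_pos hh))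
    (by rw [sub_half, abs_of_pos (half_pos hh)]; linarith)
  have hc : 0 ≤ 1 - (1 / 2 : ℝ) ^ α :=
    sub_nonneg.2 (Real.rpow_le_one (by norm_num) (by norm_num) hα.1.le)
  rw [RLint_indicator_Ioc_of_le hα.1 hh.le le_rfl,
    RLint_indicator_Ioc_of_le hα.1 (half_pos hh).le (by linarith),
    div_eq_mul_one_div h 2, Real.mul_rpow hh.le (by norm_num)] at hjump
  have hdiff : h ^ α / (α * Real.Gamma α) - h ^ α * (1 / 2) ^ α / (α * Real.Gamma α)
      = (1 - (1 / 2) ^ α) / (α * Real.Gamma α) * h ^ α := by ring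
  rwa [hdiff, abs_of_nonneg (mul_nonneg (div_nonneg hc hden.le) (Real.rpow_nonneg hh.le _))]
    at hjump

lemma abs_indicator_rpow {p : ℝ} (hp : p ≠ 0) (s : Set ℝ) :
    (fun x => |s.indicator (1 : ℝ → ℝ) x| ^ p) = s.indicator 1 := by
  funext x
  by_cases hx : x ∈ s <;> simp [hx, hp]

lemma integrableOn_abs_indicator_Ioc_rpow {p h : ℝ} (hp : p ≠ 0) :
    IntegrableOn (fun x => |(Ioc 0 h).indicator (1 : ℝ → ℝ) x| ^ p) (Ioi 0) := by
  rw [abs_indicator_rpow hp]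
  exact (integrable_indicator_iff measurableSet_Ioc).2
    (integrableOn_const measure_Ioc_lt_top.ne) |>.integrableOn

lemma LpNorm_indicator_Ioc {p h : ℝ} (hp : p ≠ 0) (hh : 0 ≤ h) :
    LpNorm p ((Ioc 0 h).indicator 1) = h ^ (1 / p) := by
  rw [LpNorm, abs_indicator_rpow hp, integral_indicator measurableSet_Ioc,
    Measure.restrict_restrict measurableSet_Ioc, Ioc_inter_Ioi, max_self]
  simp [hh]

lemma Real.eq_zero_of_forall_rpow_le {e C : ℝ} (hC : ∀ h > 0, h ^ e ≤ C) : e = 0 := by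
  by_contra he
  have hpos : 0 < |C| + 1 := by positivity
  have := hC _ (Real.rpow_pos_of_pos hpos e⁻¹)
  rw [Real.rpow_inv_rpow hpos.le he] at this
  linarith [le_abs_self C]

lemma Real.eq_of_forall_mul_rpow_le {a b c K : ℝ} (hc : 0 < c)
    (hle : ∀ h > 0, c * h ^ a ≤ K * h ^ b) : a = b := by
  have := Real.eq_zero_of_forall_rpow_le (e := a - b) (C := K / c) fun h hh => by
    rw [Real.rpow_sub hh, le_div_iff₀ hc, div_mul_eq_mul_div, div_le_iff₀ (by positivity)]
    linarith [hle h hh]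
  linarith

theorem exponent_is_alpha_sub_inv_p_general (α p γ K : ℝ) (hα : α ∈ Set.Ioo (0:ℝ) 1)
    (hp : 1 / α < p)
    (H : ∀ f : ℝ → ℝ, MeasureTheory.IntegrableOn (fun x => |f x| ^ p) (Set.Ioi 0) →
      ∀ h > (0:ℝ), omegaOn (Set.Ioi 0) (RLint α f) h ≤ K * h ^ γ * LpNorm p f) :
    γ = α - 1 / p := by
  have hp0 : p ≠ 0 := ((one_div_pos.2 hα.1).trans hp).ne'
  have hc : 0 < (1 - (1 / 2) ^ α) / (α * Real.Gamma α) :=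
    div_pos (sub_pos.2 (Real.rpow_lt_one (by norm_num) (by norm_num) hα.1))
      (mul_pos hα.1 (Real.Gamma_pos_of_pos hα.1))
  have hbound : ∀ h > 0,
      (1 - (1 / 2) ^ α) / (α * Real.Gamma α) * h ^ α ≤ K * h ^ (γ + 1 / p) := fun h hh => by
    have hH := H _ (integrableOn_abs_indicator_Ioc_rpow (h := h) hp0) h hh
    rw [LpNorm_indicator_Ioc hp0 hh.le, mul_assoc, ← Real.rpow_add hh] at hH
    exact (mul_rpow_le_omegaOn_RLint_indicator_Ioc (Ioo_subset_Ioc_self hα) hh).trans hH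
  linarith [Real.eq_of_forall_mul_rpow_le hc hbound]

theorem exponent_is_alpha_sub_inv_p (α p γ K : ℝ) (hα : α ∈ Set.Ioo (0:ℝ) 1)
    (hp : 1 / α < p) (hK : 0 < K)
    (H : ∀ f : ℝ → ℝ, MeasureTheory.IntegrableOn (fun x => |f x| ^ p) (Set.Ioi 0) →
      ∀ h > (0:ℝ), omegaOn (Set.Ioi 0) (RLint α f) h ≤ K * h ^ γ * LpNorm p f) :
    γ = α - 1 / p :=
  exponent_is_alpha_sub_inv_p_general α p γ K hα hp H
end

section
/- (Inequality (3.3).) Let α ∈ (0,1), p > 1/α, and f ∈ L_p(0,∞). Then for every x ∈ (0,1], Γ(α) · |I^α[f](x)| ≤ Z(α,p) · x^{α − 1/p} · Δ_p(f, x), where Z(α,p) = ((p−1)/(αp−1))^{1 − 1/p}. -/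
/-
Hölder's inequality with conjugate exponents `p` and `q = p/(p-1)` splits the fractional integral
into the `L_p` norm of `f` over `(0, x]`, which is one of the quantities whose supremum is
`Δ_p(f, x)`, and the `L_q` norm of the kernel `t ↦ (x - t)^(α-1)`. Since `αp > 1` the kernel lies
in `L_q(0, x)`, and its `L_q` norm is `((x^{(α-1)q+1}) / ((α-1)q+1))^{1/q} = Z(α,p) x^{α-1/p}`.
-/

open MeasureTheory Set

/-- Extension of `f` by zero to the nonpositive half-line. -/
noncomputable def zeroExt (f : ℝ → ℝ) : ℝ → ℝ := fun t => if 0 < t then f t else 0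

/-- `Δ_p(f,h) = sup_{|δ| ≤ h} sup_x (∫_x^{x+δ} |f(t)|^p dt)^(1/p)`,
where `f` is extended by zero to negative arguments. -/
noncomputable def Delta (p : ℝ) (f : ℝ → ℝ) (h : ℝ) : ℝ :=
  sSup {v | ∃ δ x : ℝ, |δ| ≤ h ∧
    v = (∫ t in Set.uIoc x (x + δ), |zeroExt f t| ^ p) ^ (1 / p)}

/-- The constant `Z(α,p) = ((p-1)/(αp-1))^(1-1/p)`. -/
noncomputable def Zconst (α p : ℝ) : ℝ := ((p - 1) / (α * p - 1)) ^ (1 - 1 / p)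

section Kernel

variable {x r : ℝ}

lemma integrableOn_Ioc_sub_rpow (hr : -1 < r) (hx : 0 ≤ x) :
    IntegrableOn (fun t => (x - t) ^ r) (Ioc 0 x) := by
  have h := (intervalIntegral.intervalIntegrable_rpow' hr (a := 0) (b := x)).comp_sub_left x
  simp only [sub_zero, sub_self] at h
  exact (intervalIntegrable_iff_integrableOn_Ioc_of_le hx).mp h.symm

lemma integral_Ioc_sub_rpow (hr : -1 < r) (hx : 0 ≤ x) :
    ∫ t in Ioc 0 x, (x - t) ^ r = x ^ (r + 1) / (r + 1) := by
  rw [← intervalIntegral.integral_of_le hx,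
    intervalIntegral.integral_comp_sub_left (fun u : ℝ => u ^ r) x, sub_self, sub_zero,
    integral_rpow (Or.inl hr), Real.zero_rpow (by linarith), sub_zero]

lemma memLp_Ioc_sub_rpow {β q : ℝ} (hq : 0 < q) (hβq : -1 < β * q) (hx : 0 ≤ x) :
    MemLp (fun t => (x - t) ^ β) (ENNReal.ofReal q) (volume.restrict (Ioc 0 x)) := by
  have hmeas : Measurable fun t : ℝ => (x - t) ^ β := by fun_prop
  rw [← integrable_norm_rpow_iff hmeas.aestronglyMeasurable (by simpa using hq)
    ENNReal.ofReal_ne_top, ENNReal.toReal_ofReal hq.le]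
  refine (integrableOn_Ioc_sub_rpow hβq hx).congr_fun (fun t ht => ?_) measurableSet_Ioc
  have hxt : 0 ≤ x - t := sub_nonneg.mpr ht.2
  rw [Real.norm_eq_abs, abs_of_nonneg (Real.rpow_nonneg hxt _), ← Real.rpow_mul hxt]

end Kernel

lemma memLp_abs_of_integrable_abs_rpow {X : Type*} [MeasurableSpace X] {μ : Measure X}
    {f : X → ℝ} {p : ℝ} (hp : 0 < p) (hf : Integrable (fun t => |f t| ^ p) μ) :
    MemLp (fun t => |f t|) (ENNReal.ofReal p) μ := by
  have hmeas : AEStronglyMeasurable (fun t => |f t|) μ := by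
    refine ((Real.continuous_rpow_const (inv_nonneg.mpr hp.le)).comp_aestronglyMeasurable
      hf.aestronglyMeasurable).congr (Filter.Eventually.of_forall fun t => ?_)
    exact Real.rpow_rpow_inv (abs_nonneg _) hp.ne'
  rw [← integrable_norm_rpow_iff hmeas (by simpa using hp) ENNReal.ofReal_ne_top,
    ENNReal.toReal_ofReal hp.le]
  simpa only [Real.norm_eq_abs, abs_abs] using hf

lemma abs_integral_Ioc_mul_sub_rpow_le {f : ℝ → ℝ} {p q β x : ℝ} (hpq : p.HolderConjugate q)
    (hβq : -1 < β * q) (hx : 0 ≤ x) (hf : IntegrableOn (fun t => |f t| ^ p) (Ioc 0 x)) :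
    |∫ t in Ioc 0 x, f t * (x - t) ^ β| ≤
      (∫ t in Ioc 0 x, |f t| ^ p) ^ (1 / p) * (x ^ (β * q + 1) / (β * q + 1)) ^ (1 / q) := by
  have hkernel : ∀ t ∈ Ioc 0 x, ‖(x - t) ^ β‖ = (x - t) ^ β := fun t ht =>
    Real.norm_of_nonneg (Real.rpow_nonneg (sub_nonneg.mpr ht.2) _)
  have hkernel_q : ∫ t in Ioc 0 x, ‖(x - t) ^ β‖ ^ q = x ^ (β * q + 1) / (β * q + 1) := by
    rw [← integral_Ioc_sub_rpow hβq hx]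
    refine setIntegral_congr_fun measurableSet_Ioc fun t ht => ?_
    rw [hkernel t ht, ← Real.rpow_mul (sub_nonneg.mpr ht.2)]
  have holder := integral_mul_norm_le_Lp_mul_Lq hpq
    (memLp_abs_of_integrable_abs_rpow hpq.pos hf) (memLp_Ioc_sub_rpow hpq.symm.pos hβq hx)
  simp only [Real.norm_eq_abs, abs_abs] at holder
  rw [← Real.norm_eq_abs, ← hkernel_q]
  refine (norm_integral_le_integral_norm _).trans (le_of_eq_of_le ?_ holder)
  simp only [norm_mul, Real.norm_eq_abs]

lemma sub_one_mul_conjExponent_add_one {α p : ℝ} (hp : p ≠ 1) :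
    (α - 1) * p.conjExponent + 1 = (α * p - 1) / (p - 1) := by
  have : p - 1 ≠ 0 := sub_ne_zero.mpr hp
  rw [Real.conjExponent]
  field_simp
  ring

lemma Zconst_nonneg {α p : ℝ} (hp : 1 ≤ p) (hαp : 1 ≤ α * p) : 0 ≤ Zconst α p :=
  Real.rpow_nonneg (div_nonneg (by linarith) (by linarith)) _

lemma rpow_div_rpow_conjExponent_eq_Zconst {α p x : ℝ} (hp : 1 < p) (hαp : 1 < α * p)
    (hx : 0 ≤ x) :
    (x ^ ((α - 1) * p.conjExponent + 1) / ((α - 1) * p.conjExponent + 1)) ^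
        (1 / p.conjExponent) = Zconst α p * x ^ (α - 1 / p) := by
  have hp0 : p - 1 ≠ 0 := sub_ne_zero.mpr hp.ne'
  have hinv : 1 / p.conjExponent = 1 - 1 / p := by
    rw [Real.conjExponent]; field_simp
  have hexp : (α * p - 1) / (p - 1) * (1 - 1 / p) = α - 1 / p := by
    field_simp
  rw [sub_one_mul_conjExponent_add_one hp.ne', hinv, div_eq_mul_inv,
    Real.mul_rpow (Real.rpow_nonneg hx _) (inv_nonneg.mpr (div_nonneg (by linarith) (by linarith))),
    ← Real.rpow_mul hx, hexp, inv_div, Zconst, mul_comm]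

lemma Gamma_mul_abs_RLint {α x : ℝ} (f : ℝ → ℝ) (hα : 0 < α) (hx : 0 ≤ x) :
    Real.Gamma α * |RLint α f x| = |∫ t in Ioc 0 x, f t * (x - t) ^ (α - 1)| := by
  have hΓ : 0 < Real.Gamma α := Real.Gamma_pos_of_pos hα
  rw [RLint, abs_mul, abs_of_pos (one_div_pos.mpr hΓ), intervalIntegral.integral_of_le hx,
    ← mul_assoc, mul_one_div_cancel hΓ.ne', one_mul]

lemma integrable_abs_zeroExt_rpow {f : ℝ → ℝ} {p : ℝ} (hp : 0 < p)
    (hf : IntegrableOn (fun t => |f t| ^ p) (Ioi 0)) :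
    Integrable (fun t => |zeroExt f t| ^ p) := by
  rw [← integrableOn_univ, ← Iic_union_Ioi (a := (0 : ℝ))]
  refine IntegrableOn.union ?_ ?_
  · refine integrableOn_zero.congr_fun (fun t ht => ?_) measurableSet_Iic
    simp [zeroExt, not_lt.mpr (mem_Iic.mp ht), hp.ne']
  · exact hf.congr_fun (fun t ht => by simp [zeroExt, mem_Ioi.mp ht]) measurableSet_Ioi

lemma rpow_integral_Ioc_le_Delta {f : ℝ → ℝ} {p x : ℝ} (hp : 0 < p) (hx : 0 ≤ x)
    (hf : IntegrableOn (fun t => |f t| ^ p) (Ioi 0)) :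
    (∫ t in Ioc 0 x, |f t| ^ p) ^ (1 / p) ≤ Delta p f x := by
  have hbdd : BddAbove {v | ∃ δ y : ℝ, |δ| ≤ x ∧
      v = (∫ t in uIoc y (y + δ), |zeroExt f t| ^ p) ^ (1 / p)} := by
    refine ⟨(∫ t, |zeroExt f t| ^ p) ^ (1 / p), ?_⟩
    rintro v ⟨δ, y, -, rfl⟩
    have hnonneg : ∀ t, 0 ≤ |zeroExt f t| ^ p := fun t => by positivity
    exact Real.rpow_le_rpow (setIntegral_nonneg measurableSet_uIoc fun t _ => hnonneg t)
      (setIntegral_le_integral (integrable_abs_zeroExt_rpow hp hf)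
        (Filter.Eventually.of_forall hnonneg)) (by positivity)
  refine le_csSup hbdd ⟨x, 0, (abs_of_nonneg hx).le, ?_⟩
  rw [zero_add, uIoc_of_le hx]
  congr 1
  refine setIntegral_congr_fun measurableSet_Ioc fun t ht => ?_
  simp only [zeroExt, if_pos ht.1]

theorem pointwise_bound_with_Delta (α p : ℝ) (hα : α ∈ Set.Ioo (0:ℝ) 1)
    (hp : 1 / α < p) (f : ℝ → ℝ)
    (hf : MeasureTheory.IntegrableOn (fun x => |f x| ^ p) (Set.Ioi 0)) :
    ∀ x ∈ Set.Ioc (0:ℝ) 1,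
      Real.Gamma α * |RLint α f x| ≤ Zconst α p * x ^ (α - 1 / p) * Delta p f x := by
  rintro x ⟨hx, -⟩
  obtain ⟨hα0, hα1⟩ := hα
  have hαp : 1 < α * p := by rwa [div_lt_iff₀ hα0, mul_comm] at hp
  have hp1 : 1 < p := (one_lt_one_div hα0 hα1).trans hp
  have hβq : -1 < (α - 1) * p.conjExponent := by
    have hpos : 0 < (α * p - 1) / (p - 1) := div_pos (by linarith) (by linarith)
    linarith [sub_one_mul_conjExponent_add_one (α := α) hp1.ne']
  calc Real.Gamma α * |RLint α f x|
      = |∫ t in Ioc 0 x, f t * (x - t) ^ (α - 1)| := Gamma_mul_abs_RLint f hα0 hx.le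
    _ ≤ (∫ t in Ioc 0 x, |f t| ^ p) ^ (1 / p) * (Zconst α p * x ^ (α - 1 / p)) := by
      rw [← rpow_div_rpow_conjExponent_eq_Zconst hp1 hαp hx.le]
      exact abs_integral_Ioc_mul_sub_rpow_le (.conjExponent hp1) hβq hx.le
        (hf.mono_set Ioc_subset_Ioi_self)
    _ ≤ Delta p f x * (Zconst α p * x ^ (α - 1 / p)) := by
      gcongr
      · exact mul_nonneg (Zconst_nonneg hp1.le hαp.le) (by positivity)
      · exact rpow_integral_Ioc_le_Delta (by linarith) hx.le hf
    _ = Zconst α p * x ^ (α - 1 / p) * Delta p f x := mul_comm _ _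
end

section
/- (Proposition 4.C.) Let d ≥ 1, 0 < α < d, p > d/α, ν ∈ ℝ, and K ∈ (0,∞). Suppose that for every measurable f : ℝ^d → ℝ with |f|_{α,d,p} < ∞ and every h ≥ 0 the inequality ω(R_α[f], h) ≤ K · h^ν · |f|_{α,d,p} holds. Then necessarily ν = α − d/p. -/
/-!
Test with indicators of balls `B(c, ε)` placed far from the origin. There the weight
`(1 + ‖y‖)^(α-d)` is negligible, so `|f|_{α,d,p}` is the `L_p` norm `≍ ε^(d/p)`, while
comparing the potential at distances `ε` and `4ε` from the centre gives
`ω(R_α f, 3ε) ≳ ε^α`. The hypothesis thus yields `ε^α ≲ ε^(ν + d/p)` for every `ε > 0`,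
which forces the exponents to agree.
-/

open MeasureTheory Set

/-- The Riesz potential `R_α[f](x) = ∫_{ℝ^d} f(y) ‖x-y‖^(α-d) dy`. -/
noncomputable def RieszPot (d : ℕ) (α : ℝ) (f : EuclideanSpace ℝ (Fin d) → ℝ)
    (x : EuclideanSpace ℝ (Fin d)) : ℝ :=
  ∫ y, f y * ‖x - y‖ ^ (α - d)

/-- Modulus of continuity of `g : ℝ^d → ℝ`:
`ω(g,h) = sup {|g x - g y| : ‖x - y‖ ≤ h}`. -/
noncomputable def omegaE (d : ℕ) (g : EuclideanSpace ℝ (Fin d) → ℝ) (h : ℝ) : ℝ :=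
  sSup {v | ∃ x y : EuclideanSpace ℝ (Fin d), ‖x - y‖ ≤ h ∧ v = |g x - g y|}

/-- The `L_p(ℝ^d)` norm. -/
noncomputable def LpNormE (d : ℕ) (p : ℝ) (f : EuclideanSpace ℝ (Fin d) → ℝ) : ℝ :=
  (∫ y, |f y| ^ p) ^ (1 / p)

/-- The norm `|f|_{α,d,p} = max( ∫ (1+‖y‖)^(α-d) |f(y)| dy , |f|_p )`. -/
noncomputable def mixedNorm (d : ℕ) (α p : ℝ) (f : EuclideanSpace ℝ (Fin d) → ℝ) : ℝ :=
  max (∫ y, (1 + ‖y‖) ^ (α - d) * |f y|) (LpNormE d p f)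

open Metric Filter Topology Module

section Kernel

variable {E : Type*} [NormedAddCommGroup E] [NormedSpace ℝ E] [FiniteDimensional ℝ E]
  [MeasurableSpace E] [BorelSpace E] {μ : Measure E} [μ.IsAddHaarMeasure]

lemma locallyIntegrable_norm_rpow [Nontrivial E] {s : ℝ} (hs : -(finrank ℝ E : ℝ) < s) :
    LocallyIntegrable (fun w : E => ‖w‖ ^ s) μ := by
  refine locallyIntegrable_of_norm_le_rpow finrank_pos (C := 1) (α := -s) (by linarith)
    (Eventually.of_forall fun w => ?_) (measurable_norm.pow_const s).aestronglyMeasurable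
  rw [neg_neg, one_mul, Real.norm_of_nonneg (by positivity)]

lemma integrableOn_norm_sub_rpow [Nontrivial E] {s : ℝ}
    (hs : -(finrank ℝ E : ℝ) < s) (x : E) {t : Set E} (ht : Bornology.IsBounded t) :
    IntegrableOn (fun y => ‖x - y‖ ^ s) t μ := by
  obtain ⟨R, htR⟩ := ht.subset_closedBall x
  have hR : IntegrableOn (fun w : E => ‖w‖ ^ s) (closedBall 0 R) μ :=
    (locallyIntegrable_norm_rpow hs).integrableOn_isCompact (isCompact_closedBall 0 R)
  refine (((Measure.measurePreserving_sub_left μ x).integrableOn_comp_preimage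
    (measurableEmbedding_subLeft x)).2 hR).mono_set fun y hy => ?_
  simpa [dist_eq_norm, norm_sub_rev] using htR hy

lemma measureReal_ball_eq [Nontrivial E] (x : E) {r : ℝ} (hr : 0 ≤ r) :
    μ.real (ball x r) = r ^ finrank ℝ E * μ.real (ball 0 1) := by
  rw [measureReal_def, Measure.addHaar_ball μ x hr, ENNReal.toReal_mul,
    ENNReal.toReal_ofReal (by positivity), measureReal_def]

end Kernel

lemma mul_abs_indicator_one {X : Type*} (s : Set X) (w : X → ℝ) :
    (fun y => w y * |s.indicator (1 : X → ℝ) y|) = s.indicator w := by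
  funext y
  by_cases hy : y ∈ s <;> simp [hy]

lemma abs_indicator_one_rpow {X : Type*} (s : Set X) {p : ℝ} (hp : p ≠ 0) :
    (fun y => |s.indicator (1 : X → ℝ) y| ^ p) = s.indicator 1 := by
  funext y
  by_cases hy : y ∈ s <;> simp [hy, Real.zero_rpow hp]

lemma eq_of_forall_mul_rpow_le {a b u v : ℝ} (ha : 0 < a)
    (h : ∀ ε > 0, a * ε ^ u ≤ b * ε ^ v) : u = v := by
  by_contra huv
  have ht : u - v ≠ 0 := sub_ne_zero.mpr huv
  set M := (|b| + 1) / a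
  have hM : 0 < M := by positivity
  set ε := M ^ (u - v)⁻¹
  have hε : 0 < ε := by positivity
  have hεt : ε ^ (u - v) = M := by
    rw [← Real.rpow_mul hM.le, inv_mul_cancel₀ ht, Real.rpow_one]
  have hεu : ε ^ u = M * ε ^ v := by rw [← hεt, ← Real.rpow_add hε, sub_add_cancel]
  have := h ε hε
  rw [hεu, ← mul_assoc, mul_div_cancel₀ _ ha.ne'] at this
  have := le_of_mul_le_mul_right this (Real.rpow_pos_of_pos hε v)
  linarith [le_abs_self b]

section RieszPotential

variable {d : ℕ} {α : ℝ}

local notation "ℝᵈ" => EuclideanSpace ℝ (Fin d)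

lemma rieszPot_nonneg {f : ℝᵈ → ℝ} (hf : 0 ≤ f) (x : ℝᵈ) :
    0 ≤ RieszPot d α f x :=
  integral_nonneg fun y => mul_nonneg (hf y) (by positivity)

lemma rieszPot_le_of_le_one [NeZero d] (hα : 0 < α) (hαd : α ≤ d) {f : ℝᵈ → ℝ}
    (hf0 : 0 ≤ f) (hf1 : f ≤ 1) (hfi : Integrable f) (x : ℝᵈ) :
    RieszPot d α f x ≤ (∫ w in ball (0 : ℝᵈ) 1, ‖w‖ ^ (α - d)) + ∫ y, f y := by
  set k := (ball (0 : ℝᵈ) 1).indicator fun w => ‖w‖ ^ (α - d)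
  have hk : Integrable k := by
    refine (integrable_indicator_iff measurableSet_ball).2 ?_
    have hs : -(finrank ℝ (ℝᵈ) : ℝ) < α - d := by
      rw [finrank_euclideanSpace_fin]; linarith
    exact ((locallyIntegrable_norm_rpow hs).integrableOn_isCompact
      (isCompact_closedBall 0 1)).mono_set ball_subset_closedBall
  have hpt : ∀ y, f y * ‖x - y‖ ^ (α - d) ≤ k (x - y) + f y := by
    intro y
    have hfy0 : 0 ≤ f y := hf0 y
    have hfy1 : f y ≤ 1 := hf1 y
    by_cases hy : ‖x - y‖ < 1
    · rw [show k (x - y) = ‖x - y‖ ^ (α - d) from indicator_of_mem (mem_ball_zero_iff.2 hy) _]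
      nlinarith [Real.rpow_nonneg (norm_nonneg (x - y)) (α - d)]
    · rw [show k (x - y) = 0 from indicator_of_notMem (by simpa using hy) _, zero_add]
      exact mul_le_of_le_one_right hfy0
        (Real.rpow_le_one_of_one_le_of_nonpos (not_lt.1 hy) (by linarith))
  calc RieszPot d α f x ≤ ∫ y, (k (x - y) + f y) :=
        integral_mono_of_nonneg (ae_of_all _ fun y => mul_nonneg (hf0 y) (by positivity))
          ((hk.comp_sub_left x).add hfi) (ae_of_all _ hpt)
    _ = (∫ w in ball (0 : ℝᵈ) 1, ‖w‖ ^ (α - d)) + ∫ y, f y := by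
        rw [integral_add (hk.comp_sub_left x) hfi, integral_sub_left_eq_self,
          integral_indicator measurableSet_ball]

-- `omegaE` is a `sSup`, which is junk (`0`) for an unbounded `g`.
lemma abs_sub_le_omegaE {g : ℝᵈ → ℝ} {B h : ℝ} (hB : ∀ x, |g x| ≤ B)
    {x y : ℝᵈ} (hxy : ‖x - y‖ ≤ h) : |g x - g y| ≤ omegaE d g h := by
  refine le_csSup ⟨2 * B, ?_⟩ ⟨x, y, hxy, rfl⟩
  rintro _ ⟨x, y, -, rfl⟩
  linarith [abs_sub (g x) (g y), hB x, hB y]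

lemma rieszPot_indicator_ball (c : ℝᵈ) (r : ℝ) (x : ℝᵈ) :
    RieszPot d α ((ball c r).indicator 1) x = ∫ y in ball c r, ‖x - y‖ ^ (α - d) := by
  rw [RieszPot, ← integral_indicator measurableSet_ball]
  congr 1
  funext y
  by_cases hy : y ∈ ball c r <;> simp [hy]

lemma rpow_mul_measureReal_ball_le_rieszPot [NeZero d] (hα : 0 < α) (hαd : α ≤ d)
    {c x : ℝᵈ} {r ρ : ℝ} (hr : r ≤ ‖x - c‖) (hρ : ‖x - c‖ + r ≤ ρ) :
    ρ ^ (α - d) * volume.real (ball c r) ≤ RieszPot d α ((ball c r).indicator 1) x := by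
  rw [rieszPot_indicator_ball]
  refine setIntegral_ge_of_const_le_real measurableSet_ball measure_ball_lt_top.ne
    (fun y hy => ?_) (integrableOn_norm_sub_rpow
      (by rw [finrank_euclideanSpace_fin]; linarith) x isBounded_ball)
  rw [mem_ball_iff_norm] at hy
  have h1 := norm_sub_le_norm_sub_add_norm_sub x y c
  have h2 := norm_sub_le_norm_sub_add_norm_sub x c y
  rw [norm_sub_rev c y] at h2
  exact Real.rpow_le_rpow_of_nonpos (by linarith) (by linarith) (by linarith)

lemma rieszPot_le_rpow_mul_measureReal_ball (hαd : α ≤ d) {c x : ℝᵈ}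
    {r ρ : ℝ} (hρ : 0 < ρ) (h : ρ + r ≤ ‖x - c‖) :
    RieszPot d α ((ball c r).indicator 1) x ≤ ρ ^ (α - d) * volume.real (ball c r) := by
  rw [rieszPot_indicator_ball]
  refine (Real.le_norm_self _).trans (norm_setIntegral_le_of_norm_le_const measure_ball_lt_top
    fun y hy => ?_)
  rw [mem_ball_iff_norm] at hy
  have := norm_sub_le_norm_sub_add_norm_sub x y c
  rw [Real.norm_of_nonneg (by positivity)]
  exact Real.rpow_le_rpow_of_nonpos hρ (by linarith) (by linarith)

lemma rpow_sub_rpow_mul_measureReal_ball_le_omegaE [NeZero d] (hα : 0 < α) (hαd : α ≤ d)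
    (c : ℝᵈ) {r : ℝ} (hr : 0 < r) :
    ((2 * r) ^ (α - d) - (3 * r) ^ (α - d)) * volume.real (ball c r)
      ≤ omegaE d (RieszPot d α ((ball c r).indicator 1)) (3 * r) := by
  obtain ⟨e, he⟩ := exists_norm_eq (ℝᵈ) zero_le_one
  have hnorm : ∀ a b : ℝ, ‖(c + a • e) - (c + b • e)‖ = |a - b| := fun a b => by
    rw [add_sub_add_left_eq_sub, ← sub_smul, norm_smul, he, mul_one, Real.norm_eq_abs]
  have hx : ‖(c + r • e) - c‖ = r := by
    simpa [he, abs_of_pos hr] using hnorm r 0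
  have hy : ‖(c + (4 * r) • e) - c‖ = 4 * r := by
    simpa [he, abs_of_pos hr] using hnorm (4 * r) 0
  have hxy : ‖(c + r • e) - (c + (4 * r) • e)‖ = 3 * r := by
    rw [hnorm, abs_of_neg (by linarith)]; ring
  have hf0 : 0 ≤ (ball c r).indicator (1 : ℝᵈ → ℝ) :=
    indicator_nonneg fun _ _ => zero_le_one
  have hB : ∀ x, |RieszPot d α ((ball c r).indicator 1) x|
      ≤ (∫ w in ball (0 : ℝᵈ) 1, ‖w‖ ^ (α - d))
        + ∫ y, (ball c r).indicator 1 y := fun x => by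
    rw [abs_of_nonneg (rieszPot_nonneg hf0 x)]
    exact rieszPot_le_of_le_one hα hαd hf0 (indicator_le_self' fun _ _ => zero_le_one)
      ((integrable_indicator_iff measurableSet_ball).2
        (integrableOn_const measure_ball_lt_top.ne)) x
  calc ((2 * r) ^ (α - d) - (3 * r) ^ (α - d)) * volume.real (ball c r)
      ≤ RieszPot d α ((ball c r).indicator 1) (c + r • e)
        - RieszPot d α ((ball c r).indicator 1) (c + (4 * r) • e) := by
        rw [sub_mul]
        exact sub_le_sub (rpow_mul_measureReal_ball_le_rieszPot hα hαd hx.ge (by linarith))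
          (rieszPot_le_rpow_mul_measureReal_ball hαd (by positivity) (by linarith))
    _ ≤ omegaE d (RieszPot d α ((ball c r).indicator 1)) (3 * r) :=
        (le_abs_self _).trans (abs_sub_le_omegaE hB hxy.le)


lemma lpNormE_indicator_one {s : Set (ℝᵈ)} (hs : MeasurableSet s) {p : ℝ}
    (hp : p ≠ 0) : LpNormE d p (s.indicator 1) = volume.real s ^ (1 / p) := by
  rw [LpNormE, abs_indicator_one_rpow s hp, integral_indicator_one hs]

lemma integrable_abs_indicator_ball_rpow (c : ℝᵈ) (r : ℝ) {p : ℝ}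
    (hp : p ≠ 0) :
    Integrable fun y => |(ball c r).indicator (1 : ℝᵈ → ℝ) y| ^ p := by
  rw [abs_indicator_one_rpow _ hp, integrable_indicator_iff measurableSet_ball]
  exact integrableOn_const measure_ball_lt_top.ne

lemma integrable_weight_mul_abs_indicator_ball (c : ℝᵈ) (r : ℝ) :
    Integrable fun y => (1 + ‖y‖) ^ (α - d) * |(ball c r).indicator 1 y| := by
  rw [mul_abs_indicator_one, integrable_indicator_iff measurableSet_ball]
  have hw : Continuous fun y : ℝᵈ => (1 + ‖y‖) ^ (α - d) :=
    (continuous_const.add continuous_norm).rpow_const fun y =>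
      Or.inl (by positivity : (0 : ℝ) < 1 + ‖y‖).ne'
  exact (hw.locallyIntegrable.integrableOn_isCompact (isCompact_closedBall c r)).mono_set
    ball_subset_closedBall

lemma tendsto_integral_weight_mul_abs_indicator_ball (hαd : α < d) (r : ℝ) :
    Tendsto (fun c : ℝᵈ =>
      ∫ y, (1 + ‖y‖) ^ (α - d) * |(ball c r).indicator 1 y|) (cocompact _) (𝓝 0) := by
  have hlim : Tendsto (fun c : ℝᵈ =>
      (1 - r + ‖c‖) ^ (-(d - α)) * volume.real (ball (0 : ℝᵈ) r))
      (cocompact _) (𝓝 0) := by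
    have := ((tendsto_rpow_neg_atTop (by linarith : (0 : ℝ) < d - α)).comp
      (tendsto_atTop_add_const_left _ (1 - r)
        (tendsto_norm_cocompact_atTop (E := ℝᵈ)))).mul_const
      (volume.real (ball (0 : ℝᵈ) r))
    rwa [zero_mul] at this
  refine squeeze_zero' (Eventually.of_forall fun c => integral_nonneg fun y => by positivity)
    ?_ hlim
  filter_upwards [(tendsto_norm_cocompact_atTop (E := ℝᵈ)).eventually_ge_atTop r]
    with c hc
  rw [mul_abs_indicator_one, integral_indicator measurableSet_ball,
    ← Measure.addHaar_real_ball_center volume c]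
  refine (Real.le_norm_self _).trans
    (norm_setIntegral_le_of_norm_le_const measure_ball_lt_top fun y hy => ?_)
  rw [mem_ball_iff_norm] at hy
  have := norm_sub_norm_le c y
  rw [Real.norm_of_nonneg (by positivity), neg_sub]
  exact Real.rpow_le_rpow_of_nonpos (by linarith) (by linarith [norm_sub_rev c y]) (by linarith)

lemma exists_mixedNorm_indicator_ball_eq [NeZero d] (hαd : α < d) {p : ℝ} (hp : p ≠ 0)
    {r : ℝ} (hr : 0 < r) : ∃ c : ℝᵈ,
      mixedNorm d α p ((ball c r).indicator 1) = volume.real (ball c r) ^ (1 / p) := by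
  have hV : 0 < volume.real (ball (0 : ℝᵈ) r) ^ (1 / p) :=
    Real.rpow_pos_of_pos (ENNReal.toReal_pos (measure_ball_pos volume _ hr).ne'
      measure_ball_lt_top.ne) _
  obtain ⟨c, hc⟩ :=
    ((tendsto_integral_weight_mul_abs_indicator_ball hαd r).eventually_lt_const hV).exists
  refine ⟨c, ?_⟩
  rw [mixedNorm, lpNormE_indicator_one measurableSet_ball hp,
    Measure.addHaar_real_ball_center volume c]
  exact max_eq_right hc.le

end RieszPotential

theorem riesz_exponent_is_alpha_sub_d_div_p_general (d : ℕ) (α p ν K : ℝ)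
    (hα : 0 < α ∧ α < d) (hp : (d : ℝ) / α < p)
    (H : ∀ f : EuclideanSpace ℝ (Fin d) → ℝ,
      MeasureTheory.Integrable (fun y => (1 + ‖y‖) ^ (α - d) * |f y|) →
      MeasureTheory.Integrable (fun y => |f y| ^ p) →
      ∀ h ≥ (0:ℝ), omegaE d (RieszPot d α f) h ≤ K * h ^ ν * mixedNorm d α p f) :
    ν = α - (d : ℝ) / p := by
  obtain ⟨hα0, hαd⟩ := hα
  have hp0 : p ≠ 0 := ((div_pos (hα0.trans hαd) hα0).trans hp).ne'
  have : NeZero d := ⟨by rintro rfl; simp at hαd; linarith⟩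
  set v := volume.real (ball (0 : EuclideanSpace ℝ (Fin d)) 1)
  have hv : 0 < v :=
    ENNReal.toReal_pos (measure_ball_pos volume _ one_pos).ne' measure_ball_lt_top.ne
  have hgap : 0 < (2 : ℝ) ^ (α - d) - 3 ^ (α - d) :=
    sub_pos.2 (Real.rpow_lt_rpow_of_neg two_pos (by norm_num) (by linarith))
  suffices ∀ ε > 0, (2 ^ (α - d) - 3 ^ (α - d)) * v * ε ^ α
      ≤ K * 3 ^ ν * v ^ (1 / p) * ε ^ (ν + d / p) by
    linarith [eq_of_forall_mul_rpow_le (mul_pos hgap hv) this]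
  intro ε hε
  obtain ⟨c, hc⟩ := exists_mixedNorm_indicator_ball_eq hαd hp0 hε
  have key := (rpow_sub_rpow_mul_measureReal_ball_le_omegaE hα0 hαd.le c hε).trans
    (H _ (integrable_weight_mul_abs_indicator_ball c ε)
      (integrable_abs_indicator_ball_rpow c ε hp0) (3 * ε) (by positivity))
  rw [hc, measureReal_ball_eq c hε.le, finrank_euclideanSpace_fin] at key
  have hεα : ε ^ α = ε ^ (α - d) * ε ^ d := by
    rw [← Real.rpow_natCast, ← Real.rpow_add hε, sub_add_cancel]
  have hεν : ε ^ (ν + d / p) = ε ^ ν * (ε ^ d) ^ (1 / p) := by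
    rw [← Real.rpow_natCast, ← Real.rpow_mul hε.le, ← Real.rpow_add hε, mul_one_div]
  rw [hεα, hεν]
  rw [Real.mul_rpow zero_le_two hε.le, Real.mul_rpow zero_le_three hε.le,
    Real.mul_rpow zero_le_three hε.le, Real.mul_rpow (by positivity) hv.le] at key
  linarith

theorem riesz_exponent_is_alpha_sub_d_div_p (d : ℕ) (hd : 1 ≤ d) (α p ν K : ℝ)
    (hα : 0 < α ∧ α < d) (hp : (d : ℝ) / α < p) (hK : 0 < K)
    (H : ∀ f : EuclideanSpace ℝ (Fin d) → ℝ,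
      MeasureTheory.Integrable (fun y => (1 + ‖y‖) ^ (α - d) * |f y|) →
      MeasureTheory.Integrable (fun y => |f y| ^ p) →
      ∀ h ≥ (0:ℝ), omegaE d (RieszPot d α f) h ≤ K * h ^ ν * mixedNorm d α p f) :
    ν = α - (d : ℝ) / p :=
  riesz_exponent_is_alpha_sub_d_div_p_general d α p ν K hα hp H
end

section
/- (Theorem 5.2.) Let d ≥ 1, 0 < α < d, γ > 0, and d/α < A₁ < B₁ ≤ ∞, and let ζ : (A₁,B₁) → (0,∞). Let f : ℝ^d → ℝ be measurable with ∫_{ℝ^d} |f(y)| |x−y|^{α−d} dy < ∞ for all x, and suppose that for every p ∈ (A₁,B₁) and every h ∈ (0, 1/e) one has ω(R_α[f], h) ≤ ζ(p) · h^{α − d/p} · |ln h|^{γ/p}. Then for every h ∈ (0, 1/e), ω(R_α[f], h) ≤ h^α / φ(Gζ, h^d · |ln h|^{−γ}), where φ(Gζ, δ) = sup_{p ∈ (A₁,B₁)} δ^{1/p} / ζ(p). -/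
open MeasureTheory Set

/-- The fundamental function `φ(Gζ, δ) = sup_{p ∈ (A,B)} δ^(1/p)/ζ(p)`. -/
noncomputable def fundFun (A : ℝ) (B : EReal) (ζ : ℝ → ℝ) (δ : ℝ) : ℝ :=
  sSup {v | ∃ p : ℝ, A < p ∧ (p : EReal) < B ∧ v = δ ^ (1 / p) / ζ p}

/-- If `S` is unbounded then `sSup S = 0` and `a / 0 = 0`: the bounds then force `x ≤ 0`. -/
theorem le_div_sSup_of_forall_le_div {S : Set ℝ} (hS : S.Nonempty) (hpos : ∀ v ∈ S, 0 < v)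
    {a x : ℝ} (ha : 0 ≤ a) (hx : ∀ v ∈ S, x ≤ a / v) : x ≤ a / sSup S := by
  rcases le_or_gt x 0 with hx0 | hx0
  · exact hx0.trans (div_nonneg ha (Real.sSup_nonneg fun v hv => (hpos v hv).le))
  have hle : ∀ v ∈ S, v ≤ a / x := fun v hv =>
    (le_div_comm₀ hx0 (hpos v hv)).1 (hx v hv)
  obtain ⟨v₀, hv₀⟩ := hS
  have hsup_pos : 0 < sSup S := (hpos v₀ hv₀).trans_le (le_csSup ⟨a / x, hle⟩ hv₀)
  exact (le_div_comm₀ hx0 hsup_pos).2 (csSup_le ⟨v₀, hv₀⟩ hle)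

theorem le_div_fundFun {A : ℝ} {B : EReal} (hAB : (A : EReal) < B) {ζ : ℝ → ℝ}
    (hζ : ∀ p : ℝ, A < p → (p : EReal) < B → 0 < ζ p) {δ a x : ℝ} (hδ : 0 < δ) (ha : 0 ≤ a)
    (hx : ∀ p : ℝ, A < p → (p : EReal) < B → x ≤ a / (δ ^ (1 / p) / ζ p)) :
    x ≤ a / fundFun A B ζ δ := by
  obtain ⟨p₀, hAp₀, hp₀B⟩ := EReal.exists_between_coe_real hAB
  rw [fundFun]
  refine le_div_sSup_of_forall_le_div ?_ ?_ ha ?_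
  · exact ⟨_, p₀, EReal.coe_lt_coe_iff.1 hAp₀, hp₀B, rfl⟩
  · rintro _ ⟨p, hAp, hpB, rfl⟩
    have := hζ p hAp hpB
    positivity
  · rintro _ ⟨p, hAp, hpB, rfl⟩
    exact hx p hAp hpB

/-- The bound `ζ(p) h^(α - d/p) L^(γ/p)` is `h^α` divided by the `p`-th term of the fundamental
function at `δ = h^d L^(-γ)`. -/
theorem mul_rpow_sub_mul_rpow_eq_div {h L : ℝ} (hh : 0 < h) (hL : 0 < L) (c α d γ p : ℝ) :
    c * h ^ (α - d / p) * L ^ (γ / p) = h ^ α / ((h ^ d * L ^ (-γ)) ^ (1 / p) / c) := by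
  rw [Real.mul_rpow (by positivity) (by positivity), ← Real.rpow_mul hh.le,
    ← Real.rpow_mul hL.le, Real.rpow_sub hh, neg_mul, one_div, Real.rpow_neg hL.le,
    ← div_eq_mul_inv, ← div_eq_mul_inv]
  rcases eq_or_ne c 0 with rfl | hc
  · simp
  have : 0 < h ^ (d / p) := by positivity
  have : 0 < L ^ (γ / p) := by positivity
  field_simp

theorem grand_lebesgue_modulus_bound_log_general (d : ℕ) (α γ A₁ : ℝ) (B₁ : EReal)
    (hAB : (A₁ : EReal) < B₁)
    (ζ : ℝ → ℝ) (hζ : ∀ p : ℝ, A₁ < p → (p : EReal) < B₁ → 0 < ζ p)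
    (f : EuclideanSpace ℝ (Fin d) → ℝ)
    (H : ∀ p : ℝ, A₁ < p → (p : EReal) < B₁ → ∀ h ∈ Set.Ioo (0:ℝ) (Real.exp 1)⁻¹,
      omegaE d (RieszPot d α f) h ≤ ζ p * h ^ (α - (d : ℝ) / p) * |Real.log h| ^ (γ / p)) :
    ∀ h ∈ Set.Ioo (0:ℝ) (Real.exp 1)⁻¹,
      omegaE d (RieszPot d α f) h
        ≤ h ^ α / fundFun A₁ B₁ ζ (h ^ (d : ℝ) * |Real.log h| ^ (-γ)) := by
  rintro h ⟨h_pos, h_lt⟩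
  have h_lt_one : h < 1 := h_lt.trans (inv_lt_one_of_one_lt₀ (Real.one_lt_exp_iff.2 one_pos))
  have hL : 0 < |Real.log h| :=
    abs_pos.2 (Real.log_ne_zero_of_pos_of_ne_one h_pos h_lt_one.ne)
  have hδ : 0 < h ^ (d : ℝ) * |Real.log h| ^ (-γ) := by positivity
  refine le_div_fundFun hAB hζ hδ (by positivity) fun p hAp hpB => ?_
  rw [← mul_rpow_sub_mul_rpow_eq_div h_pos hL]
  exact H p hAp hpB h ⟨h_pos, h_lt⟩

theorem grand_lebesgue_modulus_bound_log (d : ℕ) (hd : 1 ≤ d) (α γ A₁ : ℝ) (B₁ : EReal)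
    (hα : 0 < α ∧ α < d) (hγ : 0 < γ) (hA : (d : ℝ) / α < A₁) (hAB : (A₁ : EReal) < B₁)
    (ζ : ℝ → ℝ) (hζ : ∀ p : ℝ, A₁ < p → (p : EReal) < B₁ → 0 < ζ p)
    (f : EuclideanSpace ℝ (Fin d) → ℝ)
    (hf : ∀ x : EuclideanSpace ℝ (Fin d),
      MeasureTheory.Integrable fun y => |f y| * ‖x - y‖ ^ (α - d))
    (H : ∀ p : ℝ, A₁ < p → (p : EReal) < B₁ → ∀ h ∈ Set.Ioo (0:ℝ) (Real.exp 1)⁻¹,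
      omegaE d (RieszPot d α f) h ≤ ζ p * h ^ (α - (d : ℝ) / p) * |Real.log h| ^ (γ / p)) :
    ∀ h ∈ Set.Ioo (0:ℝ) (Real.exp 1)⁻¹,
      omegaE d (RieszPot d α f) h
        ≤ h ^ α / fundFun A₁ B₁ ζ (h ^ (d : ℝ) * |Real.log h| ^ (-γ)) :=
  grand_lebesgue_modulus_bound_log_general d α γ A₁ B₁ hAB ζ hζ f H
end
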